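/- Let K ≥ 2, let p, p' : Fin K → ℝ be strictly positive priors, fix x with marginal density value P(x) > 0 and class-conditional likelihoods m : Fin K → ℝ≥0, and let ε ∈ [0, 1/2) be such that the posterior satisfies: there is a unique i* with (m i* * p i*) / Z = 1 - ε and (m i * p i)/Z ≤ ε for all i ≠ i*, where Z = ∑_i m i * p i. Let T : Fin K → ℝ with T j > 0 for all j and define the shifted prior p' j = T j * p j / C with C = ∑_j T j * p j. If ε < min over all i, j of T j / (T i + T j), then i* is also the unique maximizer of j ↦ m j * p' j. -/

import Mathlib

/-!
The normalising constant `C` of the shifted prior is common to all labels, so it suffices to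
compare `T j * m j * p j` with `T i* * m i* * p i*`. Concentration bounds the first by `ε T j Z`
and makes the second equal to `(1 - ε) T i* Z`, and `ε < T i* / (T j + T i*)` says exactly that
`ε T j < (1 - ε) T i*`.
-/

open Finset

lemma mul_lt_one_sub_mul_of_lt_div_add {ε a b : ℝ} (hab : 0 < a + b) (h : ε < b / (a + b)) :
    ε * a < (1 - ε) * b := by
  rw [lt_div_iff₀ hab] at h
  linarith

lemma sum_pos_of_div_sum_eq_one_sub {ι : Type*} [Fintype ι] {w : ι → ℝ} (hw : ∀ k, 0 ≤ w k)
    {i : ι} {ε : ℝ} (hε : ε < 1) (hi : w i / ∑ k, w k = 1 - ε) : 0 < ∑ k, w k := by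
  rcases (sum_nonneg fun k _ => hw k).lt_or_eq with hpos | hzero
  · exact hpos
  · rw [← hzero, div_zero] at hi
    linarith

lemma mul_lt_mul_of_posterior_concentrated {ι : Type*} [Fintype ι] {w : ι → ℝ}
    (hw : ∀ k, 0 ≤ w k) {a b ε : ℝ} (ha : 0 ≤ a) (hb : 0 < b) {i j : ι}
    (hi : w i / ∑ k, w k = 1 - ε) (hj : w j / ∑ k, w k ≤ ε) (hε : ε < b / (a + b)) :
    a * w j < b * w i := by
  have hab : 0 < a + b := by linarith
  have hε1 : ε < 1 := hε.trans_le (div_le_one_of_le₀ (by linarith) hab.le)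
  have hZ := sum_pos_of_div_sum_eq_one_sub hw hε1 hi
  rw [div_eq_iff hZ.ne'] at hi
  rw [div_le_iff₀ hZ] at hj
  have hεab := mul_lt_one_sub_mul_of_lt_div_add hab hε
  calc a * w j ≤ a * (ε * ∑ k, w k) := by gcongr
    _ = ε * a * ∑ k, w k := by ring
    _ < (1 - ε) * b * ∑ k, w k := by gcongr
    _ = b * w i := by rw [hi]; ring

theorem bayes_label_invariant_under_label_shift_general (K : ℕ)
    (p p' : Fin K → ℝ) (hp : ∀ j, 0 < p j)
    (m : Fin K → NNReal)
    (Z : ℝ) (hZ : Z = ∑ i, (m i : ℝ) * p i)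
    (ε : ℝ)
    (istar : Fin K)
    (hconc : (m istar : ℝ) * p istar / Z = 1 - ε)
    (hrest : ∀ i, i ≠ istar → (m i : ℝ) * p i / Z ≤ ε)
    (T : Fin K → ℝ) (hT : ∀ j, 0 < T j)
    (C : ℝ) (hC : C = ∑ j, T j * p j)
    (hshift : ∀ j, p' j = T j * p j / C)
    (hεbound : ∀ i j, ε < T j / (T i + T j)) :
    ∀ j, j ≠ istar → (m j : ℝ) * p' j < (m istar : ℝ) * p' istar := by
  intro j hj
  subst hZ
  have hCpos : 0 < C := hC ▸ sum_pos (fun k _ => mul_pos (hT k) (hp k)) ⟨istar, mem_univ _⟩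
  have key : T j * ((m j : ℝ) * p j) < T istar * ((m istar : ℝ) * p istar) :=
    mul_lt_mul_of_posterior_concentrated (w := fun k => (m k : ℝ) * p k)
      (fun k => mul_nonneg (m k).coe_nonneg (hp k).le) (hT j).le (hT istar)
      hconc (hrest j hj) (hεbound j istar)
  rw [hshift j, hshift istar]
  calc (m j : ℝ) * (T j * p j / C) = T j * ((m j : ℝ) * p j) / C := by ring
    _ < T istar * ((m istar : ℝ) * p istar) / C := div_lt_div_of_pos_right key hCpos
    _ = (m istar : ℝ) * (T istar * p istar / C) := by ring

theorem bayes_label_invariant_under_label_shift (K : ℕ) (hK : 2 ≤ K)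
    (p p' : Fin K → ℝ) (hp : ∀ j, 0 < p j) (hp' : ∀ j, 0 < p' j)
    (Px : ℝ) (hPx : 0 < Px) (m : Fin K → NNReal)
    (Z : ℝ) (hZ : Z = ∑ i, (m i : ℝ) * p i)
    (ε : ℝ) (hε0 : 0 ≤ ε) (hεhalf : ε < 1 / 2)
    (istar : Fin K)
    (hconc : (m istar : ℝ) * p istar / Z = 1 - ε)
    (hrest : ∀ i, i ≠ istar → (m i : ℝ) * p i / Z ≤ ε)
    (T : Fin K → ℝ) (hT : ∀ j, 0 < T j)
    (C : ℝ) (hC : C = ∑ j, T j * p j)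
    (hshift : ∀ j, p' j = T j * p j / C)
    (hεbound : ∀ i j, ε < T j / (T i + T j)) :
    ∀ j, j ≠ istar → (m j : ℝ) * p' j < (m istar : ℝ) * p' istar :=
  bayes_label_invariant_under_label_shift_general K p p' hp m Z hZ ε istar hconc hrest T hT C hC
    hshift hεbound
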